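/- arXiv:1807.09908 — 8 statements merged into one kernel-verified Lean document; each statement's English description precedes it below -/
import Mathlib

section
/- Let Ω be a finite probability space with probability measure ℙ, let K, D, M be natural numbers with D + M ≤ K, let 𝒬, 𝒜, F be nonempty finite types, and let W : Ω → Finset (Fin K), S : Ω → Finset (Fin K), X : Ω → (Fin K → F), Q : Ω → 𝒬, A : Ω → 𝒜 be random variables such that for every ω: |W ω| = D, |S ω| = M, and W ω and S ω are disjoint. Suppose: (determinism) there is a function f : 𝒬 × (Fin K → F) → 𝒜 with A ω = f (Q ω, X ω) for all ω; (recoverability) there is a decoder dec : Finset (Fin K) × Finset (Fin K) × 𝒬 × 𝒜 × (Fin K → Option F) → (Fin K → Option F) such that for all ω, dec (W ω, S ω, Q ω, A ω, restrict (X ω) (S ω)) = restrict (X ω) (W ω); (privacy) for every W* ⊆ Fin K with |W*| = D and every q ∈ 𝒬, x : Fin K → F with ℙ{ω : Q ω = q ∧ X ω = x} > 0, the conditional probability ℙ[W = W* | Q = q ∧ X = x] = 1 / C(K, D). Then for every W* ⊆ Fin K with |W*| = D and every (q, x) with ℙ{Q = q ∧ X = x} > 0, there exists S* ⊆ Fin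 K with |S*| = M, S* disjoint from W*, such that dec (W*, S*, q, f(q, x), restrict x S*) = restrict x W*. -/
open Finset

/-- Probability of an event under a pmf `p` on a finite sample space. -/
noncomputable def probOf {Ω : Type*} [Fintype Ω] (p : Ω → ℝ) (E : Set Ω) : ℝ :=
  ∑ ω : Ω, E.indicator p ω

/-- The restriction of `x : Fin K → F` to a subset `T`: `some (x i)` on `T`, `none` off `T`. -/
def restrict {K : ℕ} {F : Type*} (x : Fin K → F) (T : Finset (Fin K)) : Fin K → Option F :=
  fun i => if i ∈ T then some (x i) else none

theorem stmt_2 {Ω F 𝒬 𝒜 : Type*} [Fintype Ω] [Fintype F] [Nonempty F]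
    [Fintype 𝒬] [Nonempty 𝒬] [Fintype 𝒜] [Nonempty 𝒜]
    {K D M : ℕ} (hDMK : D + M ≤ K)
    (p : Ω → ℝ) (hp : ∀ ω, 0 ≤ p ω) (hp1 : ∑ ω, p ω = 1)
    (W : Ω → Finset (Fin K)) (S : Ω → Finset (Fin K))
    (X : Ω → (Fin K → F)) (Q : Ω → 𝒬) (A : Ω → 𝒜)
    (hW : ∀ ω, (W ω).card = D) (hS : ∀ ω, (S ω).card = M)
    (hdisj : ∀ ω, Disjoint (W ω) (S ω))
    -- determinism: the answer is a function of the query and the messages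
    (f : 𝒬 × (Fin K → F) → 𝒜) (hf : ∀ ω, A ω = f (Q ω, X ω))
    -- recoverability: the demanded messages are decodable from the query, the answer,
    -- and the side information
    (dec : Finset (Fin K) × Finset (Fin K) × 𝒬 × 𝒜 × (Fin K → Option F) → (Fin K → Option F))
    (hdec : ∀ ω, dec (W ω, S ω, Q ω, A ω, restrict (X ω) (S ω)) = restrict (X ω) (W ω))
    -- privacy: conditionally on the query and the database, the demand set is uniform
    (hpriv : ∀ (Wstar : Finset (Fin K)), Wstar.card = D → ∀ (q : 𝒬) (x : Fin K → F),
      0 < probOf p {ω | Q ω = q ∧ X ω = x} →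
      probOf p {ω | W ω = Wstar ∧ Q ω = q ∧ X ω = x} / probOf p {ω | Q ω = q ∧ X ω = x}
        = 1 / (Nat.choose K D : ℝ)) :
    ∀ (Wstar : Finset (Fin K)), Wstar.card = D → ∀ (q : 𝒬) (x : Fin K → F),
      0 < probOf p {ω | Q ω = q ∧ X ω = x} →
      ∃ Sstar : Finset (Fin K), Sstar.card = M ∧ Disjoint Sstar Wstar ∧
        dec (Wstar, Sstar, q, f (q, x), restrict x Sstar) = restrict x Wstar := by
  intro Wstar hWcard q x hpos
  have hchoose : 0 < (Nat.choose K D : ℝ) := by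
    have : 0 < Nat.choose K D := Nat.choose_pos (le_trans (Nat.le_add_right D M) hDMK)
    exact_mod_cast this
  have hratio := hpriv Wstar hWcard q x hpos
  have hnum : 0 < probOf p {ω | W ω = Wstar ∧ Q ω = q ∧ X ω = x} := by
    have h2 : probOf p {ω | W ω = Wstar ∧ Q ω = q ∧ X ω = x}
        = probOf p {ω | Q ω = q ∧ X ω = x} / (Nat.choose K D : ℝ) := by
      field_simp at hratio ⊢
      linarith [hratio]
    rw [h2]
    positivity
  -- extract a witness ω in the event
  obtain ⟨ω, hω⟩ : ∃ ω, ω ∈ {ω | W ω = Wstar ∧ Q ω = q ∧ X ω = x} := by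
    by_contra h
    push_neg at h
    have : probOf p {ω | W ω = Wstar ∧ Q ω = q ∧ X ω = x} = 0 := by
      unfold probOf
      apply Finset.sum_eq_zero
      intro ω _
      exact Set.indicator_of_notMem (h ω) p
    linarith
  obtain ⟨hWω, hQω, hXω⟩ := hω
  refine ⟨S ω, hS ω, ?_, ?_⟩
  · exact (hdisj ω).symm.mono_right hWω.ge
  · have := hdec ω
    rw [hWω, hQω, hXω, hf ω, hQω, hXω] at this
    exact this
end

section
/- Let Ω be a finite probability space, F, 𝒬, 𝒜 nonempty finite types, and K, D, M natural numbers with M < D and D + M ≤ K. Let X : Fin K → Ω → F, Q : Ω → 𝒬, and A : Ω → 𝒜 be random variables. Suppose that for every W* ⊆ Fin K with |W*| = D there exists S* ⊆ Fin K with |S*| = M, S* disjoint from W*, such that H[X_{W*} | (A, Q, X_{S*})] = 0. Then there exists S_* ⊆ Fin K with |S_*| = M such that H[X_{[K]∖S_*} | (A, Q, X_{S_*})] = 0. -/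
open Finset Real

/-- Distribution (pmf) of a random variable `X` under `p`. -/
noncomputable def distOf {Ω F : Type*} [Fintype Ω] (p : Ω → ℝ) (X : Ω → F) (y : F) : ℝ :=
  probOf p {ω | X ω = y}

/-- Shannon entropy (natural logarithm) of a random variable on a finite probability space. -/
noncomputable def Hent {Ω F : Type*} [Fintype Ω] [Fintype F] (p : Ω → ℝ) (X : Ω → F) : ℝ :=
  -∑ y : F, distOf p X y * Real.log (distOf p X y)

/-- Conditional entropy `H[X | Y] = H[(X, Y)] - H[Y]`. -/
noncomputable def Hcond {Ω F G : Type*} [Fintype Ω] [Fintype F] [Fintype G]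
    (p : Ω → ℝ) (X : Ω → F) (Y : Ω → G) : ℝ :=
  Hent p (fun ω => (X ω, Y ω)) - Hent p Y

/-- The random variable `X_T = (X i)_{i ∈ T}` obtained by restricting the family `X`
to the index set `T`. -/
def XT {Ω F : Type*} {K : ℕ} (X : Fin K → Ω → F) (T : Finset (Fin K)) :
    Ω → (T → F) :=
  fun ω i => X i ω

/-!
Writing `d(x, y) = ℙ(X = x, Y = y)`, one has `H[X | Y] = ∑ d(x, y) (log ℙ(Y = y) - log d(x, y))`
with nonnegative terms, so `H[X | Y] = 0` exactly when `X` is a function of `Y` on the support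
of `ℙ`. Being recoverable from `(A, Q, X_S)` is then reflexive, transitive and closed under
subsets and unions. Take an `M`-set `S` recovering a largest `T ⊇ S`. If some `j ∉ T`, pick
`S ⊆ V ⊆ T` with `|V| = D - 1` (possible since `M < D`): the `D`-set `insert j V` is recovered
by some `M`-set `S'`, which therefore recovers `S`, hence `T`, hence `insert j T`, contradicting
maximality.
-/

section Entropy

variable {Ω F G : Type*} [Fintype Ω] {p : Ω → ℝ}

lemma probOf_nonneg (hp : ∀ ω, 0 ≤ p ω) (E : Set Ω) : 0 ≤ probOf p E :=
  sum_nonneg fun ω _ => Set.indicator_nonneg (fun ω _ => hp ω) ω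

lemma probOf_eq_zero_iff (hp : ∀ ω, 0 ≤ p ω) {E : Set Ω} : probOf p E = 0 ↔ ∀ ω ∈ E, p ω = 0 := by
  rw [probOf, sum_eq_zero_iff_of_nonneg fun ω _ => Set.indicator_nonneg (fun ω _ => hp ω) ω]
  simp [Set.indicator_apply_eq_zero]

lemma probOf_pos_iff (hp : ∀ ω, 0 ≤ p ω) {E : Set Ω} : 0 < probOf p E ↔ ∃ ω ∈ E, 0 < p ω := by
  rw [(probOf_nonneg hp E).lt_iff_ne', Ne, probOf_eq_zero_iff hp]
  simp only [not_forall, exists_prop]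
  exact exists_congr fun ω => and_congr_right fun _ => (hp ω).lt_iff_ne'.symm

lemma probOf_union {E E' : Set Ω} (h : Disjoint E E') :
    probOf p (E ∪ E') = probOf p E + probOf p E' := by
  simp only [probOf, Set.indicator_union_of_disjoint h, sum_add_distrib]

variable (p) in
lemma distOf_pair_add (X : Ω → F) (Y : Ω → G) (x : F) (y : G) :
    distOf p (fun ω => (X ω, Y ω)) (x, y) + probOf p {ω | Y ω = y ∧ X ω ≠ x} = distOf p Y y := by
  rw [distOf, distOf, ← probOf_union]
  · congr 1
    ext ω
    by_cases hX : X ω = x <;> simp [hX]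
  · rw [Set.disjoint_left]; simp +contextual

variable (p) in
lemma sum_distOf_pair [Fintype F] (X : Ω → F) (Y : Ω → G) (y : G) :
    ∑ x, distOf p (fun ω => (X ω, Y ω)) (x, y) = distOf p Y y := by
  classical
  simp only [distOf, probOf, Set.indicator_apply, Set.mem_ofPred_eq, Prod.mk.injEq]
  rw [sum_comm]
  refine sum_congr rfl fun ω _ => ?_
  by_cases hY : Y ω = y <;> simp [hY]

lemma mul_sub_log_nonneg {a b : ℝ} (ha : 0 ≤ a) (hab : a ≤ b) : 0 ≤ a * (log b - log a) := by
  rcases ha.eq_or_lt with rfl | ha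
  · simp
  · exact mul_nonneg ha.le (sub_nonneg.mpr (log_le_log ha hab))

lemma mul_sub_log_eq_zero_iff {a b : ℝ} (ha : 0 ≤ a) (hab : a ≤ b) :
    a * (log b - log a) = 0 ↔ (0 < a → a = b) := by
  rw [mul_eq_zero, sub_eq_zero]
  constructor
  · rintro (rfl | h) ha
    · exact absurd ha (lt_irrefl 0)
    · exact log_injOn_pos ha (ha.trans_le hab) h.symm
  · intro h
    rcases ha.eq_or_lt with rfl | ha
    · exact Or.inl rfl
    · exact Or.inr (congrArg log (h ha).symm)

variable (p) in
lemma Hcond_eq_sum [Fintype F] [Fintype G] (X : Ω → F) (Y : Ω → G) :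
    Hcond p X Y = ∑ x, ∑ y, distOf p (fun ω => (X ω, Y ω)) (x, y) *
      (log (distOf p Y y) - log (distOf p (fun ω => (X ω, Y ω)) (x, y))) := by
  simp only [Hcond, Hent, Fintype.sum_prod_type, mul_sub, sum_sub_distrib]
  rw [sum_comm (f := fun x y => distOf p (fun ω => (X ω, Y ω)) (x, y) * log (distOf p Y y))]
  simp only [← sum_mul, sum_distOf_pair]
  ring

def DeterminedBy (p : Ω → ℝ) (X : Ω → F) (Y : Ω → G) : Prop :=
  ∀ ω ω', 0 < p ω → 0 < p ω' → Y ω = Y ω' → X ω = X ω'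

lemma distOf_pair_eq_iff (hp : ∀ ω, 0 ≤ p ω) {X : Ω → F} {Y : Ω → G} {x : F} {y : G} :
    distOf p (fun ω => (X ω, Y ω)) (x, y) = distOf p Y y ↔
      ∀ ω, 0 < p ω → Y ω = y → X ω = x := by
  rw [← distOf_pair_add p X Y x y, left_eq_add, probOf_eq_zero_iff hp]
  refine forall_congr' fun ω => ?_
  constructor
  · intro h hω hY
    by_contra hX
    exact hω.ne' (h ⟨hY, hX⟩)
  · rintro h ⟨hY, hX⟩
    by_contra hω
    exact hX (h ((hp ω).lt_of_ne' hω) hY)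

lemma Hcond_eq_zero_iff_distOf_pair_eq [Fintype F] [Fintype G] (hp : ∀ ω, 0 ≤ p ω) {X : Ω → F}
    {Y : Ω → G} :
    Hcond p X Y = 0 ↔ ∀ x y, 0 < distOf p (fun ω => (X ω, Y ω)) (x, y) →
      distOf p (fun ω => (X ω, Y ω)) (x, y) = distOf p Y y := by
  have hd : ∀ x y, 0 ≤ distOf p (fun ω => (X ω, Y ω)) (x, y) := fun x y => probOf_nonneg hp _
  have hle : ∀ x y, distOf p (fun ω => (X ω, Y ω)) (x, y) ≤ distOf p Y y := fun x y =>
    (le_add_of_nonneg_right (probOf_nonneg hp _)).trans_eq (distOf_pair_add p X Y x y)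
  have hterm x y := mul_sub_log_nonneg (hd x y) (hle x y)
  rw [Hcond_eq_sum, sum_eq_zero_iff_of_nonneg fun x _ => sum_nonneg fun y _ => hterm x y]
  simp only [mem_univ, forall_const]
  refine forall_congr' fun x => ?_
  rw [sum_eq_zero_iff_of_nonneg fun y _ => hterm x y]
  simp only [mem_univ, forall_const]
  exact forall_congr' fun y => mul_sub_log_eq_zero_iff (hd x y) (hle x y)

lemma Hcond_eq_zero_iff_determinedBy [Fintype F] [Fintype G] (hp : ∀ ω, 0 ≤ p ω) {X : Ω → F}
    {Y : Ω → G} : Hcond p X Y = 0 ↔ DeterminedBy p X Y := by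
  rw [Hcond_eq_zero_iff_distOf_pair_eq hp]
  constructor
  · intro h ω ω' hω hω' hY
    have hpos : 0 < distOf p (fun ω => (X ω, Y ω)) (X ω, Y ω) := (probOf_pos_iff hp).2 ⟨ω, rfl, hω⟩
    exact ((distOf_pair_eq_iff hp).1 (h _ _ hpos) ω' hω' hY.symm).symm
  · intro h x y hpos
    obtain ⟨ω, hxy, hω⟩ := (probOf_pos_iff hp).1 hpos
    obtain ⟨rfl, rfl⟩ := Prod.mk.inj hxy
    exact (distOf_pair_eq_iff hp).2 fun ω' hω' hY => h ω' ω hω' hω hY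

end Entropy

section Recovery

variable {ι : Type*} [DecidableEq ι] {R : Finset ι → Finset ι → Prop}

structure IsRecoveryRelation (R : Finset ι → Finset ι → Prop) : Prop where
  refl : ∀ S, R S S
  mono : ∀ {S T T'}, T' ⊆ T → R S T → R S T'
  union : ∀ {S T U}, R S T → R S U → R S (T ∪ U)
  trans : ∀ {S T U}, R S T → R T U → R S U

variable {M D : ℕ}

theorem IsRecoveryRelation.exists_extend (hR : IsRecoveryRelation R) (hMD : M < D)
    (hcover : ∀ W : Finset ι, W.card = D → ∃ S, S.card = M ∧ R S W)
    {S T : Finset ι} (hS : S.card = M) (hST : S ⊆ T) (hT : D ≤ T.card) (hRST : R S T)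
    {j : ι} (hj : j ∉ T) :
    ∃ S' T' : Finset ι, S'.card = M ∧ S' ⊆ T' ∧ R S' T' ∧ insert j T ⊆ T' := by
  obtain ⟨V, hSV, hVT, hV⟩ := exists_subsuperset_card_eq hST (n := D - 1) (by omega) (by omega)
  have hjV : j ∉ V := fun h => hj (hVT h)
  obtain ⟨S', hS', hS'W⟩ := hcover (insert j V) (by rw [card_insert_of_notMem hjV, hV]; omega)
  have hS'S : R S' S := hR.mono (hSV.trans (subset_insert _ _)) hS'W
  refine ⟨S', insert j V ∪ T ∪ S', hS', subset_union_right,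
    hR.union (hR.union hS'W (hR.trans hS'S hRST)) (hR.refl S'), ?_⟩
  exact insert_subset (by simp) (subset_union_right.trans subset_union_left)

theorem IsRecoveryRelation.exists_univ [Fintype ι] (hR : IsRecoveryRelation R) (hMD : M < D)
    (hD : D ≤ Fintype.card ι)
    (hcover : ∀ W : Finset ι, W.card = D → ∃ S, S.card = M ∧ R S W) :
    ∃ S : Finset ι, S.card = M ∧ R S univ := by
  classical
  let pairs := (univ : Finset (Finset ι × Finset ι)).filter
    fun ST => ST.1.card = M ∧ ST.1 ⊆ ST.2 ∧ D ≤ ST.2.card ∧ R ST.1 ST.2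
  have hne : pairs.Nonempty := by
    obtain ⟨W, -, hW⟩ := exists_subset_card_eq (s := (univ : Finset ι)) (n := D) (by simpa)
    obtain ⟨S, hS, hSW⟩ := hcover W hW
    exact ⟨(S, W ∪ S), by simpa [pairs, hS, ← hW] using
      ⟨card_le_card subset_union_left, hR.union hSW (hR.refl S)⟩⟩
  obtain ⟨⟨S, T⟩, hmem, hmax⟩ := exists_max_image pairs (fun ST => ST.2.card) hne
  simp only [pairs, mem_filter, mem_univ, true_and] at hmem hmax
  obtain ⟨hS, hST, hT, hRST⟩ := hmem
  refine ⟨S, hS, ?_⟩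
  by_contra hTuniv
  obtain ⟨j, -, hj⟩ := exists_of_ssubset (ssubset_univ_iff.mpr fun h => hTuniv (h ▸ hRST))
  obtain ⟨S', T', hS', hS'T', hRT', hjT'⟩ := hR.exists_extend hMD hcover hS hST hT hRST hj
  have hlt : T.card < T'.card := card_lt_card ((ssubset_insert hj).trans_subset hjT')
  exact (hmax (S', T') ⟨hS', hS'T', show D ≤ T'.card by omega, hRT'⟩).not_gt hlt

end Recovery

section Messages

variable {Ω F 𝒬 𝒜 : Type*} {K : ℕ}

lemma XT_eq_XT_iff {X : Fin K → Ω → F} {T : Finset (Fin K)} {ω ω' : Ω} :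
    XT X T ω = XT X T ω' ↔ ∀ i ∈ T, X i ω = X i ω' := by
  simp [XT, funext_iff]

def Recovers (p : Ω → ℝ) (X : Fin K → Ω → F) (Q : Ω → 𝒬) (A : Ω → 𝒜)
    (S T : Finset (Fin K)) : Prop :=
  DeterminedBy p (XT X T) (fun ω => (A ω, Q ω, XT X S ω))

lemma isRecoveryRelation_recovers (p : Ω → ℝ) (X : Fin K → Ω → F) (Q : Ω → 𝒬) (A : Ω → 𝒜) :
    IsRecoveryRelation (Recovers p X Q A) where
  refl _ _ _ _ _ h := (Prod.mk.inj (Prod.mk.inj h).2).2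
  mono hsub h ω ω' hω hω' hY :=
    XT_eq_XT_iff.2 fun i hi => XT_eq_XT_iff.1 (h ω ω' hω hω' hY) i (hsub hi)
  union hT hU ω ω' hω hω' hY := XT_eq_XT_iff.2 fun i hi => (mem_union.1 hi).elim
    (XT_eq_XT_iff.1 (hT ω ω' hω hω' hY) i) (XT_eq_XT_iff.1 (hU ω ω' hω hω' hY) i)
  trans hST hTU ω ω' hω hω' hY := hTU ω ω' hω hω' <| by
    have hXT := hST ω ω' hω hω' hY
    simp only [Prod.mk.injEq] at hY ⊢
    exact ⟨hY.1, hY.2.1, hXT⟩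

end Messages

theorem stmt_3_general {Ω F 𝒬 𝒜 : Type*} [Fintype Ω] [Fintype F]
    [Fintype 𝒬] [Fintype 𝒜]
    {K D M : ℕ} (hMD : M < D) (hDMK : D + M ≤ K)
    (p : Ω → ℝ) (hp : ∀ ω, 0 ≤ p ω)
    (X : Fin K → Ω → F) (Q : Ω → 𝒬) (A : Ω → 𝒜)
    -- for every candidate demand set there is a compatible candidate side information set
    (hcond : ∀ Wstar : Finset (Fin K), Wstar.card = D →
      ∃ Sstar : Finset (Fin K), Sstar.card = M ∧ Disjoint Sstar Wstar ∧
        Hcond p (XT X Wstar) (fun ω => (A ω, Q ω, XT X Sstar ω)) = 0) :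
    ∃ Sstar : Finset (Fin K), Sstar.card = M ∧
      Hcond p (XT X Sstarᶜ) (fun ω => (A ω, Q ω, XT X Sstar ω)) = 0 := by
  have hR := isRecoveryRelation_recovers p X Q A
  have hcover : ∀ W : Finset (Fin K), W.card = D → ∃ S, S.card = M ∧ Recovers p X Q A S W := by
    intro W hW
    obtain ⟨S, hS, -, h0⟩ := hcond W hW
    exact ⟨S, hS, (Hcond_eq_zero_iff_determinedBy hp).1 h0⟩
  obtain ⟨S, hS, hSuniv⟩ := hR.exists_univ hMD (by simp only [Fintype.card_fin]; omega) hcover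
  exact ⟨S, hS, (Hcond_eq_zero_iff_determinedBy hp).2 (hR.mono (subset_univ _) hSuniv)⟩

theorem stmt_3 {Ω F 𝒬 𝒜 : Type*} [Fintype Ω] [Fintype F] [Nonempty F]
    [Fintype 𝒬] [Nonempty 𝒬] [Fintype 𝒜] [Nonempty 𝒜]
    {K D M : ℕ} (hMD : M < D) (hDMK : D + M ≤ K)
    (p : Ω → ℝ) (hp : ∀ ω, 0 ≤ p ω) (hp1 : ∑ ω, p ω = 1)
    (X : Fin K → Ω → F) (Q : Ω → 𝒬) (A : Ω → 𝒜)
    -- for every candidate demand set there is a compatible candidate side information set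
    (hcond : ∀ Wstar : Finset (Fin K), Wstar.card = D →
      ∃ Sstar : Finset (Fin K), Sstar.card = M ∧ Disjoint Sstar Wstar ∧
        Hcond p (XT X Wstar) (fun ω => (A ω, Q ω, XT X Sstar ω)) = 0) :
    ∃ Sstar : Finset (Fin K), Sstar.card = M ∧
      Hcond p (XT X Sstarᶜ) (fun ω => (A ω, Q ω, XT X Sstar ω)) = 0 :=
  stmt_3_general hMD hDMK p hp X Q A hcond
end

section
/- Let Ω be a finite probability space, F, 𝒬, 𝒜 nonempty finite types, and K, D, M natural numbers with M < D and D + M ≤ K. Let X : Fin K → Ω → F, Q : Ω → 𝒬, and A : Ω → 𝒜 be random variables, and suppose that for every W* ⊆ Fin K with |W*| = D there exists S* ⊆ Fin K with |S*| = M, S* disjoint from W*, such that H[X_{W*} | (A, Q, X_{S*})] = 0. Let W₁ ⊆ Fin K with D ≤ |W₁| < K − M and S₁ ⊆ Fin K with |S₁| = M, S₁ disjoint from W₁, satisfy H[X_{W₁} | (A, Q, X_{S₁})] = 0. Then there exist W₂ ⊆ Fin K with |W₂| > |W₁| and S₂ ⊆ Fin K with |S₂| = M, S₂ disjoint from W₂,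 such that H[X_{W₂} | (A, Q, X_{S₂})] = 0. -/
open Finset Real

/-!
A conditional entropy `H[X | Z]` vanishes exactly when `X` is a function of `Z` on the support
of `p`, so the statement is combinatorial. Pick `j ∉ W₁ ∪ S₁` and enlarge `S₁ ∪ {j}` to a set
`W` of size `D`. By hypothesis some `S` of size `M` recovers `X_W`; in particular it recovers
`X_{S₁}`, hence `X_{W₁}`. So `S` recovers `X` on `(W₁ ∪ W) \ S`, which has at least
`|W₁| + M + 1 - M` elements.
-/

section Determination

variable {Ω F G : Type*}

def IsDeterminedBy (p : Ω → ℝ) (X : Ω → F) (Z : Ω → G) : Prop :=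
  ∀ ω ω', p ω ≠ 0 → p ω' ≠ 0 → Z ω = Z ω' → X ω = X ω'

variable {p : Ω → ℝ}

namespace IsDeterminedBy

variable {F' : Type*} {X : Ω → F} {Y : Ω → F'} {Z : Ω → G}

lemma trans (hXY : IsDeterminedBy p X Y) (hYZ : IsDeterminedBy p Y Z) : IsDeterminedBy p X Z :=
  fun ω ω' hω hω' h => hXY ω ω' hω hω' (hYZ ω ω' hω hω' h)

lemma comp (f : G → F) : IsDeterminedBy p (f ∘ Z) Z :=
  fun _ _ _ _ h => congrArg f h

lemma prodMk (hX : IsDeterminedBy p X Z) (hY : IsDeterminedBy p Y Z) :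
    IsDeterminedBy p (fun ω => (X ω, Y ω)) Z :=
  fun ω ω' hω hω' h => Prod.ext (hX ω ω' hω hω' h) (hY ω ω' hω hω' h)

end IsDeterminedBy

lemma isDeterminedBy_XT_iff {K : ℕ} {X : Fin K → Ω → F} {T : Finset (Fin K)} {Z : Ω → G} :
    IsDeterminedBy p (XT X T) Z ↔ ∀ i ∈ T, IsDeterminedBy p (X i) Z :=
  ⟨fun h i hi ω ω' hω hω' hZ => congrFun (h ω ω' hω hω' hZ) ⟨i, hi⟩,
    fun h ω ω' hω hω' hZ => funext fun i => h i i.2 ω ω' hω hω' hZ⟩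

lemma isDeterminedBy_XT_union {𝒬 𝒜 : Type*} {K : ℕ} {X : Fin K → Ω → F} {Q : Ω → 𝒬}
    {A : Ω → 𝒜} {W₁ S₁ W S : Finset (Fin K)}
    (h₁ : IsDeterminedBy p (XT X W₁) (fun ω => (A ω, Q ω, XT X S₁ ω)))
    (h : IsDeterminedBy p (XT X W) (fun ω => (A ω, Q ω, XT X S ω))) (hS₁W : S₁ ⊆ W) :
    IsDeterminedBy p (XT X (W₁ ∪ W)) (fun ω => (A ω, Q ω, XT X S ω)) := by
  have hS₁ :
      IsDeterminedBy p (fun ω => (A ω, Q ω, XT X S₁ ω)) (fun ω => (A ω, Q ω, XT X S ω)) :=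
    (IsDeterminedBy.comp Prod.fst).prodMk <| (IsDeterminedBy.comp (Prod.fst ∘ Prod.snd)).prodMk <|
      isDeterminedBy_XT_iff.2 fun i hi => isDeterminedBy_XT_iff.1 h i (hS₁W hi)
  refine isDeterminedBy_XT_iff.2 fun i hi => ?_
  rcases mem_union.1 hi with hiW₁ | hiW
  · exact (isDeterminedBy_XT_iff.1 h₁ i hiW₁).trans hS₁
  · exact isDeterminedBy_XT_iff.1 h i hiW

end Determination

section Entropy

variable {Ω F G : Type*} [Fintype Ω] (p : Ω → ℝ)

lemma distOf_eq_sum_filter [DecidableEq F] (X : Ω → F) (y : F) :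
    distOf p X y = ∑ ω with X ω = y, p ω := by
  simp [distOf, probOf, Set.indicator_apply, sum_filter]

variable {p}

lemma distOf_nonneg (hp : ∀ ω, 0 ≤ p ω) (X : Ω → F) (y : F) : 0 ≤ distOf p X y := by
  classical
  rw [distOf_eq_sum_filter]
  exact sum_nonneg fun ω _ => hp ω

lemma distOf_ne_zero_iff (hp : ∀ ω, 0 ≤ p ω) (X : Ω → F) (y : F) :
    distOf p X y ≠ 0 ↔ ∃ ω, X ω = y ∧ p ω ≠ 0 := by
  classical
  rw [distOf_eq_sum_filter, Ne, sum_eq_zero_iff_of_nonneg fun ω _ => hp ω]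
  simp

variable (p)

lemma sum_distOf_prod [Fintype F] (X : Ω → F) (Z : Ω → G) (z : G) :
    ∑ x, distOf p (fun ω => (X ω, Z ω)) (x, z) = distOf p Z z := by
  classical
  simp_rw [distOf_eq_sum_filter, Prod.mk.injEq, and_comm (a := X _ = _), ← filter_filter]
  exact sum_fiberwise _ X p

lemma distOf_prod_add_sum_filter [DecidableEq F] [DecidableEq G] (X : Ω → F) (Z : Ω → G)
    (x : F) (z : G) :
    distOf p (fun ω => (X ω, Z ω)) (x, z) + ∑ ω with Z ω = z ∧ X ω ≠ x, p ω = distOf p Z z := by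
  simp_rw [distOf_eq_sum_filter, Prod.mk.injEq, and_comm (a := X _ = _), ← filter_filter]
  exact sum_filter_add_sum_filter_not _ _ p

variable {p}

lemma distOf_prod_le (hp : ∀ ω, 0 ≤ p ω) (X : Ω → F) (Z : Ω → G) (x : F) (z : G) :
    distOf p (fun ω => (X ω, Z ω)) (x, z) ≤ distOf p Z z := by
  classical
  rw [← distOf_prod_add_sum_filter p X Z x z]
  exact le_add_of_nonneg_right (sum_nonneg fun ω _ => hp ω)

lemma distOf_prod_eq_iff (hp : ∀ ω, 0 ≤ p ω) (X : Ω → F) (Z : Ω → G) (x : F) (z : G) :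
    distOf p (fun ω => (X ω, Z ω)) (x, z) = distOf p Z z ↔
      ∀ ω, Z ω = z → p ω ≠ 0 → X ω = x := by
  classical
  rw [← distOf_prod_add_sum_filter p X Z x z, left_eq_add,
    sum_eq_zero_iff_of_nonneg fun ω _ => hp ω]
  simp only [mem_filter, mem_univ, true_and, and_imp]
  grind

lemma hcond_eq_sum [Fintype F] [Fintype G] (X : Ω → F) (Z : Ω → G) :
    Hcond p X Z = ∑ xz : F × G, distOf p (fun ω => (X ω, Z ω)) xz *
      (log (distOf p Z xz.2) - log (distOf p (fun ω => (X ω, Z ω)) xz)) := by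
  have hmarg : ∑ xz : F × G, distOf p (fun ω => (X ω, Z ω)) xz * log (distOf p Z xz.2) =
      ∑ z, distOf p Z z * log (distOf p Z z) := by
    rw [Fintype.sum_prod_type, sum_comm]
    simp_rw [← sum_mul, sum_distOf_prod]
  rw [Hcond, Hent, Hent, ← hmarg]
  simp_rw [mul_sub, sum_sub_distrib]
  ring

lemma isDeterminedBy_iff_distOf (hp : ∀ ω, 0 ≤ p ω) (X : Ω → F) (Z : Ω → G) :
    IsDeterminedBy p X Z ↔ ∀ x z, distOf p (fun ω => (X ω, Z ω)) (x, z) ≠ 0 →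
      distOf p (fun ω => (X ω, Z ω)) (x, z) = distOf p Z z := by
  simp_rw [distOf_prod_eq_iff hp, distOf_ne_zero_iff hp, Prod.mk.injEq]
  constructor
  · rintro hdet x z ⟨ω₀, ⟨rfl, rfl⟩, hω₀⟩ ω hZ hω
    exact hdet ω ω₀ hω hω₀ hZ
  · intro h ω ω' hω hω' hZ
    exact h _ _ ⟨ω', ⟨rfl, rfl⟩, hω'⟩ ω hZ hω

lemma hcond_eq_zero_iff [Fintype F] [Fintype G] (hp : ∀ ω, 0 ≤ p ω) (X : Ω → F) (Z : Ω → G) :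
    Hcond p X Z = 0 ↔ IsDeterminedBy p X Z := by
  have hterm : ∀ xz : F × G, 0 ≤ distOf p (fun ω => (X ω, Z ω)) xz *
      (log (distOf p Z xz.2) - log (distOf p (fun ω => (X ω, Z ω)) xz)) := by
    rintro ⟨x, z⟩
    rcases (distOf_nonneg hp (fun ω => (X ω, Z ω)) (x, z)).eq_or_lt with h0 | hpos
    · simp [← h0]
    · exact mul_nonneg hpos.le (sub_nonneg.2 (log_le_log hpos (distOf_prod_le hp X Z x z)))
  rw [hcond_eq_sum, sum_eq_zero_iff_of_nonneg fun xz _ => hterm xz, isDeterminedBy_iff_distOf hp]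
  simp only [mem_univ, true_implies, Prod.forall, mul_eq_zero, sub_eq_zero, or_iff_not_imp_left]
  refine forall₂_congr fun x z => imp_congr_right fun hne => ?_
  have hpos := (distOf_nonneg hp (fun ω => (X ω, Z ω)) (x, z)).lt_of_ne' hne
  exact ⟨fun h => (log_injOn_pos (hpos.trans_le (distOf_prod_le hp X Z x z)) hpos h).symm,
    fun h => by rw [h]⟩

end Entropy

theorem stmt_4_general {Ω F 𝒬 𝒜 : Type*} [Fintype Ω] [Fintype F]
    [Fintype 𝒬] [Fintype 𝒜]
    {K D M : ℕ} (hMD : M < D) (hDMK : D + M ≤ K)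
    (p : Ω → ℝ) (hp : ∀ ω, 0 ≤ p ω)
    (X : Fin K → Ω → F) (Q : Ω → 𝒬) (A : Ω → 𝒜)
    -- for every candidate demand set there is a compatible candidate side information set
    (hcond : ∀ Wstar : Finset (Fin K), Wstar.card = D →
      ∃ Sstar : Finset (Fin K), Sstar.card = M ∧ Disjoint Sstar Wstar ∧
        Hcond p (XT X Wstar) (fun ω => (A ω, Q ω, XT X Sstar ω)) = 0)
    (W₁ S₁ : Finset (Fin K)) (hW₁K : W₁.card < K - M)
    (hS₁ : S₁.card = M) (hdisj₁ : Disjoint S₁ W₁)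
    (hrec₁ : Hcond p (XT X W₁) (fun ω => (A ω, Q ω, XT X S₁ ω)) = 0) :
    ∃ W₂ S₂ : Finset (Fin K), W₁.card < W₂.card ∧ S₂.card = M ∧ Disjoint S₂ W₂ ∧
      Hcond p (XT X W₂) (fun ω => (A ω, Q ω, XT X S₂ ω)) = 0 := by
  classical
  obtain ⟨j, -, hj⟩ := exists_mem_notMem_of_card_lt_card (s := W₁ ∪ S₁) (t := univ) <| by
    grw [card_union_le, card_univ, Fintype.card_fin]
    omega
  obtain ⟨hjW₁, hjS₁⟩ : j ∉ W₁ ∧ j ∉ S₁ := by simpa using hj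
  obtain ⟨W, hjS₁W, hWcard⟩ := exists_superset_card_eq (s := insert j S₁) (n := D)
    (by rw [card_insert_of_notMem hjS₁, hS₁]; omega) (by rw [Fintype.card_fin]; omega)
  obtain ⟨hjW, hS₁W⟩ := insert_subset_iff.1 hjS₁W
  obtain ⟨S, hScard, -, hrec⟩ := hcond W hWcard
  rw [hcond_eq_zero_iff hp] at hrec hrec₁
  refine ⟨(W₁ ∪ W) \ S, S, ?_, hScard, disjoint_sdiff, (hcond_eq_zero_iff hp _ _).2 ?_⟩
  · have hsub : insert j (W₁ ∪ S₁) ⊆ W₁ ∪ W :=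
      insert_subset (mem_union_right _ hjW) (by gcongr)
    have hcard := card_le_card hsub
    rw [card_insert_of_notMem hj, card_union_of_disjoint hdisj₁.symm, hS₁] at hcard
    have := le_card_sdiff S (W₁ ∪ W)
    omega
  · exact isDeterminedBy_XT_iff.2 fun i hi => isDeterminedBy_XT_iff.1
      (isDeterminedBy_XT_union hrec₁ hrec hS₁W) i (mem_sdiff.1 hi).1

theorem stmt_4 {Ω F 𝒬 𝒜 : Type*} [Fintype Ω] [Fintype F] [Nonempty F]
    [Fintype 𝒬] [Nonempty 𝒬] [Fintype 𝒜] [Nonempty 𝒜]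
    {K D M : ℕ} (hMD : M < D) (hDMK : D + M ≤ K)
    (p : Ω → ℝ) (hp : ∀ ω, 0 ≤ p ω) (hp1 : ∑ ω, p ω = 1)
    (X : Fin K → Ω → F) (Q : Ω → 𝒬) (A : Ω → 𝒜)
    -- for every candidate demand set there is a compatible candidate side information set
    (hcond : ∀ Wstar : Finset (Fin K), Wstar.card = D →
      ∃ Sstar : Finset (Fin K), Sstar.card = M ∧ Disjoint Sstar Wstar ∧
        Hcond p (XT X Wstar) (fun ω => (A ω, Q ω, XT X Sstar ω)) = 0)
    (W₁ S₁ : Finset (Fin K)) (hW₁D : D ≤ W₁.card) (hW₁K : W₁.card < K - M)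
    (hS₁ : S₁.card = M) (hdisj₁ : Disjoint S₁ W₁)
    (hrec₁ : Hcond p (XT X W₁) (fun ω => (A ω, Q ω, XT X S₁ ω)) = 0) :
    ∃ W₂ S₂ : Finset (Fin K), W₁.card < W₂.card ∧ S₂.card = M ∧ Disjoint S₂ W₂ ∧
      Hcond p (XT X W₂) (fun ω => (A ω, Q ω, XT X S₂ ω)) = 0 :=
  stmt_4_general hMD hDMK p hp X Q A hcond W₁ S₁ hW₁K hS₁ hdisj₁ hrec₁
end

section
/- Let F be a field, n a natural number, ω : Fin n → F an injective map, and U ⊆ Fin n a subset with |U| = u ≤ n. Suppose x, y : Fin n → F satisfy x j = y j for all j ∈ U, and for every natural number i < n − u, Σ_{j : Fin n} (ω j)^i · x j = Σ_{j : Fin n} (ω j)^i · y j. Then x = y. -/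
open Finset

/-- A vector is uniquely determined by its coordinates on a `u`-subset together with
its first `n - u` power-sum syndromes at distinct evaluation points. -/
theorem stmt_7 {F : Type*} [Field F] {n u : ℕ}
    (ω : Fin n → F) (hω : Function.Injective ω)
    (U : Finset (Fin n)) (hU : U.card = u) (hun : u ≤ n)
    (x y : Fin n → F) (hxy : ∀ j ∈ U, x j = y j)
    (hsyn : ∀ i : ℕ, i < n - u → ∑ j : Fin n, ω j ^ i * x j = ∑ j : Fin n, ω j ^ i * y j) :
    x = y := by
  set z : Fin n → F := fun j => x j - y j with hz
  have hzU : ∀ j ∈ U, z j = 0 := fun j hj => by simp [hz, hxy j hj]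
  have hcard : Uᶜ.card = n - u := by
    rw [Finset.card_compl, hU]; simp
  -- syndromes of z restricted to Uᶜ vanish
  have hsynz : ∀ i : ℕ, i < n - u → ∑ j ∈ Uᶜ, ω j ^ i * z j = 0 := by
    intro i hi
    have h1 : ∑ j : Fin n, ω j ^ i * z j = 0 := by
      have := hsyn i hi
      simp only [hz, mul_sub, Finset.sum_sub_distrib, this, sub_self]
    rw [← Finset.sum_add_sum_compl U (fun j => ω j ^ i * z j)] at h1
    rw [Finset.sum_eq_zero (fun j hj => by rw [hzU j hj, mul_zero]), zero_add] at h1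
    exact h1
  -- index Uᶜ by Fin (n - u)
  let e : Fin (n - u) ≃ {j // j ∈ Uᶜ} := (Uᶜ.equivFin.trans (finCongr hcard)).symm
  set v : Fin (n - u) → F := fun k => z (e k) with hv
  have hvzero : v = 0 := by
    apply Matrix.eq_zero_of_forall_pow_sum_mul_pow_eq_zero
      (f := fun k => ω (e k)) (fun a b hab => e.injective (Subtype.ext (hω hab)))
    intro i
    have : ∑ k : Fin (n - u), v k * ω (e k) ^ (i : ℕ)
        = ∑ j ∈ Uᶜ, ω j ^ (i : ℕ) * z j := by
      rw [← Finset.sum_coe_sort Uᶜ (fun j => ω j ^ (i : ℕ) * z j)]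
      rw [← Equiv.sum_comp e (fun j : {j // j ∈ Uᶜ} => ω (j : Fin n) ^ (i : ℕ) * z (j : Fin n))]
      exact Finset.sum_congr rfl fun k _ => mul_comm _ _
    rw [this]
    exact hsynz i i.isLt
  funext j
  have hzj : z j = 0 := by
    by_cases hj : j ∈ U
    · exact hzU j hj
    · have hj' : j ∈ Uᶜ := Finset.mem_compl.mpr hj
      have := congrFun hvzero (e.symm ⟨j, hj'⟩)
      simpa [hv] using this
  have := sub_eq_zero.mp hzj
  exact this
end

section
/- Let F be a finite field, K and M natural numbers with M ≤ K, and ω : Fin K → F an injective map. For every b : Fin (K − M) → F, the number of vectors v : Fin K → F satisfying Σ_{j : Fin K} (ω j)^i · v j = b i for every i : Fin (K − M) (with i regarded as a natural number exponent) is exactly |F|^M. -/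
open Finset

/-- Every fiber of the syndrome map of the `(K, M)` generalized Reed–Solomon code has
exactly `|F|^M` elements. -/
theorem stmt_8 {F : Type*} [Field F] [Fintype F] [DecidableEq F]
    {K M : ℕ} (hMK : M ≤ K)
    (ω : Fin K → F) (hω : Function.Injective ω)
    (b : Fin (K - M) → F) :
    (Finset.univ.filter (fun v : Fin K → F =>
        ∀ i : Fin (K - M), ∑ j : Fin K, ω j ^ (i : ℕ) * v j = b i)).card
      = Fintype.card F ^ M := by
  classical
  set f : (Fin K → F) → (Fin (K - M) → F) :=
    fun v i => ∑ j, ω j ^ (i : ℕ) * v j with hf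
  have hadd : ∀ v d, f (v + d) = f v + f d := by
    intro v d; funext i
    simp [hf, mul_add, Finset.sum_add_distrib]
  have hsub : ∀ v d, f (v - d) = f v - f d := by
    intro v d; funext i
    simp [hf, mul_sub, Finset.sum_sub_distrib]
  -- surjectivity via the Vandermonde matrix
  have hsurj : Function.Surjective f := by
    intro w
    set B := (Matrix.vandermonde ω).transpose with hB
    have hdet : B.det ≠ 0 := by
      rw [hB, Matrix.det_transpose, Matrix.det_vandermonde]
      refine Finset.prod_ne_zero_iff.2 fun i _ => ?_
      refine Finset.prod_ne_zero_iff.2 fun j hj => ?_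
      rw [Finset.mem_Ioi] at hj
      exact sub_ne_zero.2 fun h => (ne_of_gt hj) (hω h)
    set w' : Fin K → F := fun k => if h : (k : ℕ) < K - M then w ⟨k, h⟩ else 0 with hw'
    refine ⟨B⁻¹.mulVec w', ?_⟩
    have hBv : B.mulVec (B⁻¹.mulVec w') = w' := by
      rw [Matrix.mulVec_mulVec, Matrix.mul_nonsing_inv _ (isUnit_iff_ne_zero.2 hdet),
        Matrix.one_mulVec]
    funext i
    have h1 : f (B⁻¹.mulVec w') i
        = B.mulVec (B⁻¹.mulVec w') (Fin.castLE (Nat.sub_le K M) i) := by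
      simp [hf, hB, Matrix.mulVec, dotProduct, Matrix.transpose_apply,
        Matrix.vandermonde]
    rw [h1, hBv, hw']
    simp [i.isLt]
  -- all fibers have the same cardinality
  have key : ∀ b1 b2 : Fin (K - M) → F,
      (univ.filter fun v => f v = b1).card = (univ.filter fun v => f v = b2).card := by
    intro b1 b2
    obtain ⟨d, hd⟩ := hsurj (b2 - b1)
    refine Finset.card_bij' (fun v _ => v + d) (fun v _ => v - d) ?_ ?_ ?_ ?_
    · intro v hv
      simp only [mem_filter, mem_univ, true_and] at hv ⊢
      rw [hadd, hv, hd]; abel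
    · intro v hv
      simp only [mem_filter, mem_univ, true_and] at hv ⊢
      rw [hsub, hv, hd]; abel
    · intro v _; simp
    · intro v _; simp
  -- counting
  have hcount : ∑ b' : Fin (K - M) → F, (univ.filter fun v => f v = b').card
      = Fintype.card F ^ K := by
    rw [← Finset.card_eq_sum_card_fiberwise (fun v _ => Finset.mem_univ (f v)),
      Finset.card_univ, Fintype.card_fun, Fintype.card_fin]
  have hc : Fintype.card F ^ (K - M) * (univ.filter fun v => f v = b).card
      = Fintype.card F ^ K := by
    rw [← hcount, Finset.sum_congr rfl (fun b' _ => key b' b), Finset.sum_const,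
      smul_eq_mul, Finset.card_univ, Fintype.card_fun, Fintype.card_fin]
  have hpow : Fintype.card F ^ K = Fintype.card F ^ (K - M) * Fintype.card F ^ M := by
    rw [← pow_add]; congr 1; omega
  have hpos : 0 < Fintype.card F ^ (K - M) := pow_pos Fintype.card_pos _
  have hfilter : (Finset.univ.filter (fun v : Fin K → F =>
        ∀ i : Fin (K - M), ∑ j : Fin K, ω j ^ (i : ℕ) * v j = b i))
      = univ.filter fun v => f v = b := by
    apply Finset.filter_congr
    intro v _
    simp [hf, funext_iff, eq_comm]
  rw [hfilter]
  exact Nat.eq_of_mul_eq_mul_left hpos (hc.trans hpow)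
end

section
/- Let F be a finite field, K and M natural numbers with M ≤ K, and ω : Fin K → F an injective map. Let Ω be a finite probability space and X : Ω → (Fin K → F) a random variable whose distribution is the uniform distribution on Fin K → F. Define A : Ω → (Fin (K − M) → F) by A ω' = (i ↦ Σ_{j : Fin K} (ω j)^i · (X ω' j)). Then the distribution of A is the uniform distribution on Fin (K − M) → F, and consequently H[A] = (K − M) · log |F|. -/
/-! The syndrome map `x ↦ (∑ⱼ ω j ^ i * x j)ᵢ` is `F`-linear, and its restriction to the first
`K - M` coordinates is given by the transpose of an invertible Vandermonde matrix, so it is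
surjective. A surjective homomorphism of finite groups has fibres of equal size `|G| / |H|`, so it
pushes the uniform distribution forward to the uniform distribution, whose entropy is
`log |H| = (K - M) log |F|`. -/

open Finset Real

open Matrix

def IsUniformDist {Ω G : Type*} [Fintype Ω] [Fintype G] (p : Ω → ℝ) (X : Ω → G) : Prop :=
  ∀ x, distOf p X x = (Fintype.card G : ℝ)⁻¹

lemma distOf_comp {Ω G H : Type*} [Fintype Ω] [Fintype G] [DecidableEq H] (p : Ω → ℝ)
    (X : Ω → G) (T : G → H) (b : H) :
    distOf p (fun ω => T (X ω)) b = ∑ x with T x = b, distOf p X x := by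
  classical
  simp only [distOf, probOf, Set.indicator_apply, Set.mem_ofPred_eq, ← Finset.sum_filter]
  convert (Finset.sum_fiberwise_eq_sum_filter univ {x | T x = b} X p).symm using 2
  simp

lemma card_fiber_mul_card_eq_of_surjective {G H : Type*} [AddGroup G] [Fintype G] [AddGroup H]
    [Fintype H] [DecidableEq H] (f : G →+ H) (hf : Function.Surjective f) (b : H) :
    #{x | f x = b} * Fintype.card H = Fintype.card G :=
  calc #{x | f x = b} * Fintype.card H = ∑ c : H, #{x | f x = c} := by
        simp [AddMonoidHom.card_fiber_eq_of_mem_range f (hf _) (hf b), mul_comm]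
    _ = Fintype.card G := (card_eq_sum_card_fiberwise fun _ _ => mem_univ _).symm

lemma IsUniformDist.map_of_surjective {Ω G H : Type*} [Fintype Ω] [AddGroup G] [Fintype G]
    [AddGroup H] [Fintype H] {p : Ω → ℝ} {X : Ω → G} (hX : IsUniformDist p X) (f : G →+ H)
    (hf : Function.Surjective f) : IsUniformDist p (fun ω => f (X ω)) := by
  classical
  intro b
  have hfiber : #{x | f x = b} ≠ 0 := by
    obtain ⟨x, rfl⟩ := hf b
    exact Finset.card_ne_zero.mpr ⟨x, by simp⟩
  rw [distOf_comp, Finset.sum_congr rfl fun x _ => hX x, sum_const, nsmul_eq_mul,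
    ← card_fiber_mul_card_eq_of_surjective f hf b, Nat.cast_mul, mul_inv, ← mul_assoc,
    mul_inv_cancel₀ (Nat.cast_ne_zero.mpr hfiber), one_mul]

lemma IsUniformDist.hent_eq {Ω G : Type*} [Fintype Ω] [Fintype G] {p : Ω → ℝ} {X : Ω → G}
    (hX : IsUniformDist p X) : Hent p X = Real.log (Fintype.card G) := by
  simp only [Hent, hX _, sum_const, card_univ, nsmul_eq_mul, Real.log_inv]
  rcases eq_or_ne (Fintype.card G : ℝ) 0 with h | h
  · simp [h]
  · field_simp

lemma Matrix.mulVec_submatrix_surjective_of_isUnit {m n R : Type*} [Fintype m] [DecidableEq m]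
    [CommRing R] {A : Matrix m m R} (hA : IsUnit A) {e : n → m} (he : Function.Injective e) :
    Function.Surjective (A.submatrix e id).mulVec :=
  (he.surjective_comp_right' fun _ => 0).comp (Matrix.mulVec_surjective_iff_isUnit.mpr hA)

theorem stmt_9_general {Ω F : Type*} [Fintype Ω] [Field F] [Fintype F]
    {K M : ℕ}
    (ω : Fin K → F) (hω : Function.Injective ω)
    (p : Ω → ℝ)
    (X : Ω → (Fin K → F))
    -- the message vector is uniformly distributed on `Fin K → F`
    (hX : ∀ x : Fin K → F, distOf p X x = ((Fintype.card F : ℝ) ^ K)⁻¹) :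
    (∀ b : Fin (K - M) → F,
      distOf p (fun ω' => fun i : Fin (K - M) => ∑ j : Fin K, ω j ^ (i : ℕ) * X ω' j) b
        = ((Fintype.card F : ℝ) ^ (K - M))⁻¹) ∧
    Hent p (fun ω' => fun i : Fin (K - M) => ∑ j : Fin K, ω j ^ (i : ℕ) * X ω' j)
      = ((K - M : ℕ) : ℝ) * Real.log (Fintype.card F) := by
  set S := ((vandermonde ω)ᵀ.submatrix (Fin.castLE (K.sub_le M)) id).mulVecLin
  have hS : Function.Surjective S := mulVec_submatrix_surjective_of_isUnit
    ((isUnit_iff_isUnit_det _).mpr <| by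
      simpa using (det_vandermonde_ne_zero_iff.mpr hω).isUnit)
    (Fin.castLE_injective _)
  have hXunif : IsUniformDist p X := fun x => by simp [hX x]
  have hSunif : IsUniformDist p (fun ω' => S (X ω')) :=
    hXunif.map_of_surjective S.toAddMonoidHom hS
  have hsyndrome : (fun ω' (i : Fin (K - M)) => ∑ j : Fin K, ω j ^ (i : ℕ) * X ω' j) =
      fun ω' => S (X ω') := rfl
  rw [hsyndrome, hSunif.hent_eq]
  exact ⟨fun b => by simpa using hSunif b, by simp⟩

/-- The answer of the GRS Code protocol (the `K - M` Vandermonde syndromes of a uniformly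
distributed message vector) is uniformly distributed, hence has entropy `(K - M) log |F|`. -/
theorem stmt_9 {Ω F : Type*} [Fintype Ω] [Field F] [Fintype F] [DecidableEq F]
    {K M : ℕ} (hMK : M ≤ K)
    (ω : Fin K → F) (hω : Function.Injective ω)
    (p : Ω → ℝ) (hp : ∀ ω', 0 ≤ p ω') (hp1 : ∑ ω', p ω' = 1)
    (X : Ω → (Fin K → F))
    -- the message vector is uniformly distributed on `Fin K → F`
    (hX : ∀ x : Fin K → F, distOf p X x = ((Fintype.card F : ℝ) ^ K)⁻¹) :
    (∀ b : Fin (K - M) → F,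
      distOf p (fun ω' => fun i : Fin (K - M) => ∑ j : Fin K, ω j ^ (i : ℕ) * X ω' j) b
        = ((Fintype.card F : ℝ) ^ (K - M))⁻¹) ∧
    Hent p (fun ω' => fun i : Fin (K - M) => ∑ j : Fin K, ω j ^ (i : ℕ) * X ω' j)
      = ((K - M : ℕ) : ℝ) * Real.log (Fintype.card F) :=
  stmt_9_general ω hω p X hX
end

section
/- Let K, D, M, α, β, γ, ρ, σ, λ, n₀ be natural numbers and n : Fin λ → ℕ, and define m : ℕ → ℕ by m j = |{i : Fin λ | n i = j}|. Assume: 1 ≤ D; β = D + α; K = β·γ + ρ; λ ≤ γ; σ + n₀ ≤ ρ; for every i, 1 ≤ n i ≤ D; n₀ + Σ_i n i = D; σ + λ·α ≤ M; and D + M ≤ K. Then, as an identity of rational numbers, T₁ · (C(K,D) · C(K−D,M))⁻¹ · P₅ = γ! · ρ! · (β!)^γ / K!, where T₁ = C(ρ,n₀) · C(γ,λ) · (λ! / Π_{j=1}^{D} (m j)!) · Π_i C(β, n i) · C(ρ−n₀, σ) · Π_i C(β − n i, α) · C(K−D−σ−λ·α, M−σ−λ·α), and P₅ = [ (Π_{j=1}^{D}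 (m j)!) · n₀! · (Π_i (n i)!) · (M−σ−λ·α)! · σ! · (α!)^λ / (D! · M!) ] · [ (γ−λ)! · (ρ−σ−n₀)! · (Π_i (β−α−n i)!) · (β!)^{γ−λ} / (K−D−σ−λ·α)! ]. -/
/-!
Every binomial coefficient in `T₁` and in the prior is expanded into factorials. Grouped
appropriately, the factorials of `P₅` complete them to the multinomial identities
`C(γ,λ) λ! (γ-λ)! = γ!`, `C(ρ,n₀) C(ρ-n₀,σ) n₀! σ! (ρ-σ-n₀)! = ρ!`,
`C(β,nᵢ) C(β-nᵢ,α) nᵢ! α! (β-α-nᵢ)! = β!` for each `i`, and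
`C(K,D) C(K-D,M) D! M! (K-D-M)! = K!`, while `C(K-D-σ-λα, M-σ-λα)` cancels against
`(M-σ-λα)! (K-D-M)! / (K-D-σ-λα)!`. The product of the `(m j)!` cancels outright.
-/

open Finset Nat

namespace Nat

theorem choose_mul_choose_sub_mul_factorial_mul_factorial_mul_factorial {n a b : ℕ}
    (h : a + b ≤ n) :
    n.choose a * (n - a).choose b * a ! * b ! * (n - b - a)! = n ! := by
  rw [← choose_mul_factorial_mul_factorial (show a ≤ n by omega),
    ← choose_mul_factorial_mul_factorial (show b ≤ n - a by omega),
    Nat.sub_right_comm n b a]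
  ring

theorem prod_choose_mul_prod_choose_sub_mul_prod_factorial {ι : Type*} (s : Finset ι)
    (f : ι → ℕ) {n b : ℕ} (h : ∀ i ∈ s, f i + b ≤ n) :
    (∏ i ∈ s, n.choose (f i)) * (∏ i ∈ s, (n - f i).choose b) * (∏ i ∈ s, (f i)!)
      * (∏ i ∈ s, (n - b - f i)!) * b ! ^ s.card = n ! ^ s.card := by
  simp only [← prod_mul_distrib, ← prod_const]
  exact prod_congr rfl fun i hi =>
    by rw [← choose_mul_choose_sub_mul_factorial_mul_factorial_mul_factorial (h i hi)]; ring

end Nat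

theorem stmt_10_general (K D M α β γ ρ σ lam n₀ : ℕ) (n : Fin lam → ℕ)
    (m : ℕ → ℕ)
    (hβ : β = D + α) (hlam : lam ≤ γ)
    (hρ : σ + n₀ ≤ ρ) (hn : ∀ i, 1 ≤ n i ∧ n i ≤ D)
    (hM : σ + lam * α ≤ M) (hDMK : D + M ≤ K) :
    ((Nat.choose ρ n₀ : ℚ) * (Nat.choose γ lam : ℚ)
        * ((lam.factorial : ℚ) / ∏ j ∈ Finset.Icc 1 D, ((m j).factorial : ℚ))
        * (∏ i : Fin lam, (Nat.choose β (n i) : ℚ))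
        * (Nat.choose (ρ - n₀) σ : ℚ)
        * (∏ i : Fin lam, (Nat.choose (β - n i) α : ℚ))
        * (Nat.choose (K - D - σ - lam * α) (M - σ - lam * α) : ℚ))
      * ((Nat.choose K D : ℚ) * (Nat.choose (K - D) M : ℚ))⁻¹
      * ((((∏ j ∈ Finset.Icc 1 D, ((m j).factorial : ℚ)) * (n₀.factorial : ℚ)
            * (∏ i : Fin lam, ((n i).factorial : ℚ))
            * ((M - σ - lam * α).factorial : ℚ) * (σ.factorial : ℚ)
            * (α.factorial : ℚ) ^ lam)
          / ((D.factorial : ℚ) * (M.factorial : ℚ)))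
        * ((((γ - lam).factorial : ℚ) * ((ρ - σ - n₀).factorial : ℚ)
            * (∏ i : Fin lam, ((β - α - n i).factorial : ℚ))
            * (β.factorial : ℚ) ^ (γ - lam))
          / ((K - D - σ - lam * α).factorial : ℚ)))
      = ((γ.factorial : ℚ) * (ρ.factorial : ℚ) * (β.factorial : ℚ) ^ γ)
          / (K.factorial : ℚ) := by
  have hγ_fact : (γ.choose lam * lam ! * (γ - lam)! : ℚ) = γ ! := by
    exact_mod_cast choose_mul_factorial_mul_factorial hlam
  have hρ_fact : (ρ.choose n₀ * (ρ - n₀).choose σ * n₀ ! * σ ! * (ρ - σ - n₀)! : ℚ) = ρ ! := by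
    exact_mod_cast choose_mul_choose_sub_mul_factorial_mul_factorial_mul_factorial (by omega)
  have hβ_fact : ((∏ i, β.choose (n i) : ℕ) * (∏ i, (β - n i).choose α : ℕ) * (∏ i, (n i)! : ℕ)
      * (∏ i, (β - α - n i)! : ℕ) * α ! ^ lam : ℚ) = β ! ^ lam := by
    have := prod_choose_mul_prod_choose_sub_mul_prod_factorial univ n (n := β) (b := α)
      fun i _ => by have := (hn i).2; omega
    rw [Finset.card_fin] at this
    exact_mod_cast this
  have hK_fact : (K.choose D * (K - D).choose M * D ! * M ! * (K - M - D)! : ℚ) = K ! := by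
    exact_mod_cast choose_mul_choose_sub_mul_factorial_mul_factorial_mul_factorial (by omega)
  have hleftover : ((K - D - σ - lam * α).choose (M - σ - lam * α) * (M - σ - lam * α)!
      * (K - M - D)! : ℚ) = (K - D - σ - lam * α)! := by
    have := choose_mul_factorial_mul_factorial
      (show M - σ - lam * α ≤ K - D - σ - lam * α by omega)
    rw [show K - D - σ - lam * α - (M - σ - lam * α) = K - M - D by omega] at this
    exact_mod_cast this
  have hKD_ne : (K.choose D : ℚ) ≠ 0 := by exact_mod_cast (choose_pos (by omega)).ne'
  have hKDM_ne : ((K - D).choose M : ℚ) ≠ 0 := by exact_mod_cast (choose_pos (by omega)).ne'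
  have hleftover_ne : ((K - D - σ - lam * α).choose (M - σ - lam * α) : ℚ) ≠ 0 := by
    exact_mod_cast (choose_pos (by omega)).ne'
  rw [← hleftover, ← hγ_fact, ← hρ_fact, ← hK_fact, ← Nat.sub_add_cancel hlam, pow_add,
    Nat.add_sub_cancel, ← hβ_fact]
  push_cast
  field_simp

/-- The identity `ℙ(Q = Q | N = N) = T₁ · (C(K,D)C(K-D,M))⁻¹ · P₅ = γ!ρ!(β!)^γ / K!`
from the privacy proof of the Generalized Partition and Code protocol. -/
theorem stmt_10 (K D M α β γ ρ σ lam n₀ : ℕ) (n : Fin lam → ℕ)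
    (m : ℕ → ℕ)
    (hm : ∀ j, m j = (Finset.univ.filter (fun i : Fin lam => n i = j)).card)
    (hD : 1 ≤ D) (hβ : β = D + α) (hK : K = β * γ + ρ) (hlam : lam ≤ γ)
    (hρ : σ + n₀ ≤ ρ) (hn : ∀ i, 1 ≤ n i ∧ n i ≤ D)
    (hsum : n₀ + ∑ i, n i = D) (hM : σ + lam * α ≤ M) (hDMK : D + M ≤ K) :
    ((Nat.choose ρ n₀ : ℚ) * (Nat.choose γ lam : ℚ)
        * ((lam.factorial : ℚ) / ∏ j ∈ Finset.Icc 1 D, ((m j).factorial : ℚ))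
        * (∏ i : Fin lam, (Nat.choose β (n i) : ℚ))
        * (Nat.choose (ρ - n₀) σ : ℚ)
        * (∏ i : Fin lam, (Nat.choose (β - n i) α : ℚ))
        * (Nat.choose (K - D - σ - lam * α) (M - σ - lam * α) : ℚ))
      * ((Nat.choose K D : ℚ) * (Nat.choose (K - D) M : ℚ))⁻¹
      * ((((∏ j ∈ Finset.Icc 1 D, ((m j).factorial : ℚ)) * (n₀.factorial : ℚ)
            * (∏ i : Fin lam, ((n i).factorial : ℚ))
            * ((M - σ - lam * α).factorial : ℚ) * (σ.factorial : ℚ)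
            * (α.factorial : ℚ) ^ lam)
          / ((D.factorial : ℚ) * (M.factorial : ℚ)))
        * ((((γ - lam).factorial : ℚ) * ((ρ - σ - n₀).factorial : ℚ)
            * (∏ i : Fin lam, ((β - α - n i).factorial : ℚ))
            * (β.factorial : ℚ) ^ (γ - lam))
          / ((K - D - σ - lam * α).factorial : ℚ)))
      = ((γ.factorial : ℚ) * (ρ.factorial : ℚ) * (β.factorial : ℚ) ^ γ)
          / (K.factorial : ℚ) :=
  stmt_10_general K D M α β γ ρ σ lam n₀ n m hβ hlam hρ hn hM hDMK
end

section
/- Let K, D, M, α, β, γ, ρ, σ, λ, n₀ be natural numbers and n : Fin λ → ℕ, and define m : ℕ → ℕ by m j = |{i : Fin λ | n i = j}|. Assume: 1 ≤ D; β = D + α; K = β·γ + ρ; λ ≤ γ; σ + n₀ ≤ ρ; for every i, 1 ≤ n i ≤ D; n₀ + Σ_i n i = D; σ + λ·α ≤ M; and D + M ≤ K. Then, as an identity of rational numbers, T₂ · P₁₃ = ( C(γ,λ) · (λ! / Π_{j=1}^{D} (m j)!) · C(ρ,n₀) · Π_i C(β, n i) )⁻¹, where T₂ = C(ρ−n₀,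 σ) · Π_i C(β − n i, α) · C(K−D−σ−λ·α, M−σ−λ·α), and P₁₃ = [ (Π_{j=1}^{D} (m j)!) · n₀! · (Π_i (n i)!) · (M−σ−λ·α)! · σ! · (α!)^λ · (γ−λ)! / (γ! · ρ! · (β!)^λ) ] · [ (K−D−M)! · (ρ−σ−n₀)! · (Π_i (β−α−n i)!) / (K−D−σ−λ·α)! ]. -/
open Finset Nat

/-!
Writing every binomial coefficient as `a! / (b! (a - b)!)`, the left-hand side becomes a quotient
of factorials in which, once the index identities `ρ - n₀ - σ = ρ - σ - n₀`,
`(K - D - σ - λα) - (M - σ - λα) = K - D - M` and `β - nᵢ - α = β - α - nᵢ` are applied, each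
factorial cancels against the same factorial in the reciprocal of the pattern count.
-/

section ProdChoose

variable {ι K : Type*} [Semifield K] [CharZero K] (s : Finset ι)

theorem prod_cast_choose {a b : ι → ℕ} (hab : ∀ i ∈ s, b i ≤ a i) :
    ∏ i ∈ s, ((a i).choose (b i) : K)
      = (∏ i ∈ s, ((a i)! : K)) / ((∏ i ∈ s, ((b i)! : K)) * ∏ i ∈ s, ((a i - b i)! : K)) := by
  rw [← prod_mul_distrib, ← prod_div_distrib]
  exact prod_congr rfl fun i hi => Nat.cast_choose K (hab i hi)

theorem prod_cast_choose_const_left {a : ℕ} {b : ι → ℕ} (hab : ∀ i ∈ s, b i ≤ a) :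
    ∏ i ∈ s, (a.choose (b i) : K)
      = (a ! : K) ^ #s / ((∏ i ∈ s, ((b i)! : K)) * ∏ i ∈ s, ((a - b i)! : K)) := by
  rw [prod_cast_choose s hab, prod_const]

theorem prod_cast_choose_const_right {a : ι → ℕ} {b : ℕ} (hab : ∀ i ∈ s, b ≤ a i) :
    ∏ i ∈ s, ((a i).choose b : K)
      = (∏ i ∈ s, ((a i)! : K)) / ((b ! : K) ^ #s * ∏ i ∈ s, ((a i - b)! : K)) := by
  rw [prod_cast_choose s hab, prod_const]

end ProdChoose

theorem stmt_11_general (K D M α β γ ρ σ lam n₀ : ℕ) (n : Fin lam → ℕ)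
    (m : ℕ → ℕ)
    (hβ : β = D + α) (hlam : lam ≤ γ)
    (hρ : σ + n₀ ≤ ρ) (hn : ∀ i, 1 ≤ n i ∧ n i ≤ D)
    (hM : σ + lam * α ≤ M) (hDMK : D + M ≤ K) :
    ((Nat.choose (ρ - n₀) σ : ℚ)
        * (∏ i : Fin lam, (Nat.choose (β - n i) α : ℚ))
        * (Nat.choose (K - D - σ - lam * α) (M - σ - lam * α) : ℚ))
      * ((((∏ j ∈ Finset.Icc 1 D, ((m j).factorial : ℚ)) * (n₀.factorial : ℚ)
            * (∏ i : Fin lam, ((n i).factorial : ℚ))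
            * ((M - σ - lam * α).factorial : ℚ) * (σ.factorial : ℚ)
            * (α.factorial : ℚ) ^ lam * ((γ - lam).factorial : ℚ))
          / ((γ.factorial : ℚ) * (ρ.factorial : ℚ) * (β.factorial : ℚ) ^ lam))
        * ((((K - D - M).factorial : ℚ) * ((ρ - σ - n₀).factorial : ℚ)
            * (∏ i : Fin lam, ((β - α - n i).factorial : ℚ)))
          / ((K - D - σ - lam * α).factorial : ℚ)))
      = ((Nat.choose γ lam : ℚ)
          * ((lam.factorial : ℚ) / ∏ j ∈ Finset.Icc 1 D, ((m j).factorial : ℚ))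
          * (Nat.choose ρ n₀ : ℚ)
          * (∏ i : Fin lam, (Nat.choose β (n i) : ℚ)))⁻¹ := by
  have hnβ (i : Fin lam) : n i ≤ β := by have := (hn i).2; omega
  have hαβ (i : Fin lam) : α ≤ β - n i := by have := (hn i).2; omega
  rw [Nat.cast_choose ℚ (show σ ≤ ρ - n₀ by omega),
    Nat.cast_choose ℚ (show M - σ - lam * α ≤ K - D - σ - lam * α by omega),
    Nat.cast_choose ℚ hlam, Nat.cast_choose ℚ (show n₀ ≤ ρ by omega),
    prod_cast_choose_const_right _ fun i _ => hαβ i,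
    prod_cast_choose_const_left _ fun i _ => hnβ i,
    show ρ - n₀ - σ = ρ - σ - n₀ by omega,
    show K - D - σ - lam * α - (M - σ - lam * α) = K - D - M by omega,
    Finset.card_univ, Fintype.card_fin]
  simp only [fun i => tsub_right_comm (a := β) (b := n i) (c := α)]
  field_simp

/-- The identity `ℙ(W = W | N = N, Q = Q) = T₂ · P₁₃ = (number of placement patterns)⁻¹`
from the privacy proof of the Generalized Partition and Code protocol. -/
theorem stmt_11 (K D M α β γ ρ σ lam n₀ : ℕ) (n : Fin lam → ℕ)
    (m : ℕ → ℕ)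
    (hm : ∀ j, m j = (Finset.univ.filter (fun i : Fin lam => n i = j)).card)
    (hD : 1 ≤ D) (hβ : β = D + α) (hK : K = β * γ + ρ) (hlam : lam ≤ γ)
    (hρ : σ + n₀ ≤ ρ) (hn : ∀ i, 1 ≤ n i ∧ n i ≤ D)
    (hsum : n₀ + ∑ i, n i = D) (hM : σ + lam * α ≤ M) (hDMK : D + M ≤ K) :
    ((Nat.choose (ρ - n₀) σ : ℚ)
        * (∏ i : Fin lam, (Nat.choose (β - n i) α : ℚ))
        * (Nat.choose (K - D - σ - lam * α) (M - σ - lam * α) : ℚ))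
      * ((((∏ j ∈ Finset.Icc 1 D, ((m j).factorial : ℚ)) * (n₀.factorial : ℚ)
            * (∏ i : Fin lam, ((n i).factorial : ℚ))
            * ((M - σ - lam * α).factorial : ℚ) * (σ.factorial : ℚ)
            * (α.factorial : ℚ) ^ lam * ((γ - lam).factorial : ℚ))
          / ((γ.factorial : ℚ) * (ρ.factorial : ℚ) * (β.factorial : ℚ) ^ lam))
        * ((((K - D - M).factorial : ℚ) * ((ρ - σ - n₀).factorial : ℚ)
            * (∏ i : Fin lam, ((β - α - n i).factorial : ℚ)))
          / ((K - D - σ - lam * α).factorial : ℚ)))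
      = ((Nat.choose γ lam : ℚ)
          * ((lam.factorial : ℚ) / ∏ j ∈ Finset.Icc 1 D, ((m j).factorial : ℚ))
          * (Nat.choose ρ n₀ : ℚ)
          * (∏ i : Fin lam, (Nat.choose β (n i) : ℚ)))⁻¹ :=
  stmt_11_general K D M α β γ ρ σ lam n₀ n m hβ hlam hρ hn hM hDMK
end
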